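/- arXiv:2311.05968 — 2 statements merged into one kernel-verified Lean document; each statement's English description precedes it below -/
import Mathlib

section
/- Let P ⊂ ℝ² be an open bounded convex set, let Θ = {θ_i} be a countable dense set of directions in [0,2π), and (w_i) positive reals with ∑ w_i < ∞. Define d(x,y) = ∑_i w_i d_{θ_i}(x,y) where d_θ is the strip cross-ratio pseudo-metric. Then d is a metric on P. -/
/-- Projection of a point of the plane onto the direction `(cos θ, sin θ)`. -/
noncomputable def projDir (θ : ℝ) (p : ℝ × ℝ) : ℝ := p.1 * Real.cos θ + p.2 * Real.sin θ

/-- Lower bound of the minimal strip containing `P` in direction `θ`. -/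
noncomputable def stripXi (θ : ℝ) (P : Set (ℝ × ℝ)) : ℝ := sInf (projDir θ '' P)

/-- Upper bound of the minimal strip containing `P` in direction `θ`. -/
noncomputable def stripEta (θ : ℝ) (P : Set (ℝ × ℝ)) : ℝ := sSup (projDir θ '' P)

/-- The strip cross-ratio pseudo-metric `d_θ` on `P`. -/
noncomputable def stripD (θ : ℝ) (P : Set (ℝ × ℝ)) (x y : ℝ × ℝ) : ℝ :=
  |Real.log (((projDir θ y - stripXi θ P) * (stripEta θ P - projDir θ x)) /
    ((projDir θ x - stripXi θ P) * (stripEta θ P - projDir θ y)))|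

lemma projDir_abs_le (θ : ℝ) (p : ℝ × ℝ) : |projDir θ p| ≤ 2 * ‖p‖ := by
  have h1 : |p.1| ≤ ‖p‖ := by
    have := norm_fst_le p; simpa [Real.norm_eq_abs] using this
  have h2 : |p.2| ≤ ‖p‖ := by
    have := norm_snd_le p; simpa [Real.norm_eq_abs] using this
  have hc := Real.abs_cos_le_one θ
  have hs := Real.abs_sin_le_one θ
  calc |projDir θ p| ≤ |p.1 * Real.cos θ| + |p.2 * Real.sin θ| := abs_add_le _ _
    _ ≤ |p.1| * 1 + |p.2| * 1 := by
        rw [abs_mul, abs_mul]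
        gcongr <;> positivity
    _ ≤ 2 * ‖p‖ := by nlinarith [abs_nonneg p.1, abs_nonneg p.2]

lemma strip_bound (P : Set (ℝ × ℝ)) (hPb : Bornology.IsBounded P) (hPne : P.Nonempty) :
    ∃ R > 0, ∀ θ : ℝ, (∀ p ∈ P, |projDir θ p| ≤ R) ∧
      BddBelow (projDir θ '' P) ∧ BddAbove (projDir θ '' P) ∧
      -R ≤ stripXi θ P ∧ stripEta θ P ≤ R := by
  obtain ⟨R0, hR0⟩ := hPb.exists_norm_le
  refine ⟨2 * R0 + 1, ?_, fun θ => ?_⟩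
  · obtain ⟨p, hp⟩ := hPne
    have := hR0 p hp
    have := norm_nonneg p
    linarith
  · have hb : ∀ p ∈ P, |projDir θ p| ≤ 2 * R0 + 1 := fun p hp => by
      have := projDir_abs_le θ p
      have := hR0 p hp
      linarith
    have hbb : BddBelow (projDir θ '' P) := by
      refine ⟨-(2 * R0 + 1), fun t ht => ?_⟩
      obtain ⟨p, hp, rfl⟩ := ht
      have := hb p hp; rw [abs_le] at this; linarith [this.1]
    have hba : BddAbove (projDir θ '' P) := by
      refine ⟨2 * R0 + 1, fun t ht => ?_⟩
      obtain ⟨p, hp, rfl⟩ := ht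
      have := hb p hp; rw [abs_le] at this; linarith [this.2]
    refine ⟨hb, hbb, hba, ?_, ?_⟩
    · apply le_csInf (hPne.image _)
      intro t ht
      obtain ⟨p, hp, rfl⟩ := ht
      have := hb p hp; rw [abs_le] at this; linarith [this.1]
    · apply csSup_le (hPne.image _)
      intro t ht
      obtain ⟨p, hp, rfl⟩ := ht
      have := hb p hp; rw [abs_le] at this; linarith [this.2]

lemma strip_inner (P : Set (ℝ × ℝ)) (hPo : IsOpen P) (hPne : P.Nonempty)
    (hbdd : ∀ θ : ℝ, BddBelow (projDir θ '' P) ∧ BddAbove (projDir θ '' P))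
    (x : ℝ × ℝ) (hx : x ∈ P) :
    ∃ ε > 0, ∀ θ : ℝ, stripXi θ P + ε ≤ projDir θ x ∧ projDir θ x + ε ≤ stripEta θ P := by
  obtain ⟨δ, hδ, hball⟩ := Metric.isOpen_iff.mp hPo x hx
  refine ⟨δ / 2, by linarith, fun θ => ?_⟩
  have hpyth : Real.cos θ ^ 2 + Real.sin θ ^ 2 = 1 := Real.cos_sq_add_sin_sq θ
  have hmem : ∀ s : ℝ, |s| ≤ δ / 2 →
      (x.1 + s * Real.cos θ, x.2 + s * Real.sin θ) ∈ P := by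
    intro s hs
    apply hball
    rw [Metric.mem_ball, Prod.dist_eq]
    have hc := Real.abs_cos_le_one θ
    have hsin := Real.abs_sin_le_one θ
    apply max_lt
    · simp only [Real.dist_eq]
      have : |x.1 + s * Real.cos θ - x.1| = |s * Real.cos θ| := by ring_nf
      rw [this, abs_mul]
      nlinarith [abs_nonneg s]
    · simp only [Real.dist_eq]
      have : |x.2 + s * Real.sin θ - x.2| = |s * Real.sin θ| := by ring_nf
      rw [this, abs_mul]
      nlinarith [abs_nonneg s]
  have hproj : ∀ s : ℝ, projDir θ (x.1 + s * Real.cos θ, x.2 + s * Real.sin θ)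
      = projDir θ x + s := by
    intro s
    simp only [projDir]
    linear_combination s * hpyth
  constructor
  · have hm := hmem (-(δ/2)) (by rw [abs_neg, abs_of_nonneg (by linarith)])
    have hle : stripXi θ P ≤ projDir θ x + -(δ/2) := by
      rw [← hproj]
      exact csInf_le (hbdd θ).1 (Set.mem_image_of_mem _ hm)
    linarith
  · have hm := hmem (δ/2) (by rw [abs_of_nonneg (by linarith)])
    have hle : projDir θ x + δ/2 ≤ stripEta θ P := by
      rw [← hproj]
      exact le_csSup (hbdd θ).2 (Set.mem_image_of_mem _ hm)
    linarith

noncomputable def stripPhi (θ : ℝ) (P : Set (ℝ × ℝ)) (x : ℝ × ℝ) : ℝ :=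
  Real.log ((projDir θ x - stripXi θ P) / (stripEta θ P - projDir θ x))

lemma stripD_eq_phi (θ : ℝ) (P : Set (ℝ × ℝ)) (x y : ℝ × ℝ)
    (hx1 : 0 < projDir θ x - stripXi θ P) (hx2 : 0 < stripEta θ P - projDir θ x)
    (hy1 : 0 < projDir θ y - stripXi θ P) (hy2 : 0 < stripEta θ P - projDir θ y) :
    stripD θ P x y = |stripPhi θ P y - stripPhi θ P x| := by
  unfold stripD stripPhi
  rw [Real.log_div (by positivity) (by positivity), Real.log_mul hy1.ne' hx2.ne',
      Real.log_mul hx1.ne' hy2.ne', Real.log_div hy1.ne' hy2.ne', Real.log_div hx1.ne' hx2.ne']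
  congr 1
  ring

lemma stripPhi_abs_le (θ : ℝ) (P : Set (ℝ × ℝ)) (x : ℝ × ℝ) (R ε : ℝ)
    (hR : 0 < R) (hε : 0 < ε)
    (hξ : -R ≤ stripXi θ P) (hη : stripEta θ P ≤ R)
    (h1 : stripXi θ P + ε ≤ projDir θ x) (h2 : projDir θ x + ε ≤ stripEta θ P) :
    |stripPhi θ P x| ≤ Real.log (2 * R / ε) := by
  set a := projDir θ x
  set ξ := stripXi θ P
  set η := stripEta θ P
  have ha1 : 0 < a - ξ := by linarith
  have ha2 : 0 < η - a := by linarith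
  have hub : (a - ξ) / (η - a) ≤ 2 * R / ε :=
    div_le_div₀ (by positivity) (by linarith) hε (by linarith)
  have hlb : ε / (2 * R) ≤ (a - ξ) / (η - a) :=
    div_le_div₀ (by positivity) (by linarith) ha2 (by linarith)
  rw [abs_le]
  constructor
  · have h := Real.log_le_log (by positivity) hlb
    rwa [show ε / (2 * R) = (2 * R / ε)⁻¹ by rw [inv_div], Real.log_inv] at h
  · exact Real.log_le_log (by positivity) hub
theorem stmt_12 (P : Set (ℝ × ℝ)) (hPo : IsOpen P) (hPb : Bornology.IsBounded P)
    (hPconv : Convex ℝ P) (hPne : P.Nonempty)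
    (θi : ℕ → ℝ) (hdense : Set.Ico 0 (2 * Real.pi) ⊆ closure (Set.range θi))
    (w : ℕ → ℝ) (hw : ∀ i, 0 < w i) (hsum : Summable w) :
    (∀ x ∈ P, ∀ y ∈ P, Summable (fun i => w i * stripD (θi i) P x y)) ∧
    (∀ x ∈ P, ∀ y ∈ P, ((∑' i, w i * stripD (θi i) P x y) = 0 ↔ x = y)) ∧
    (∀ x ∈ P, ∀ y ∈ P,
      (∑' i, w i * stripD (θi i) P x y) = ∑' i, w i * stripD (θi i) P y x) ∧
    (∀ x ∈ P, ∀ y ∈ P, ∀ z ∈ P,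
      (∑' i, w i * stripD (θi i) P x y) ≤
        (∑' i, w i * stripD (θi i) P x z) + ∑' i, w i * stripD (θi i) P z y) := by
  obtain ⟨R, hR, hRθ⟩ := strip_bound P hPb hPne
  have hbdd : ∀ θ : ℝ, BddBelow (projDir θ '' P) ∧ BddAbove (projDir θ '' P) :=
    fun θ => ⟨(hRθ θ).2.1, (hRθ θ).2.2.1⟩
  have hinner := fun x hx => strip_inner P hPo hPne hbdd x hx
  have hpos : ∀ x ∈ P, ∀ θ : ℝ,
      0 < projDir θ x - stripXi θ P ∧ 0 < stripEta θ P - projDir θ x := by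
    intro x hx θ
    obtain ⟨ε, hε, h⟩ := hinner x hx
    obtain ⟨h1, h2⟩ := h θ
    constructor <;> linarith
  have hD_eq : ∀ x ∈ P, ∀ y ∈ P, ∀ θ : ℝ,
      stripD θ P x y = |stripPhi θ P y - stripPhi θ P x| := fun x hx y hy θ =>
    stripD_eq_phi θ P x y (hpos x hx θ).1 (hpos x hx θ).2 (hpos y hy θ).1 (hpos y hy θ).2
  have hphi_bd : ∀ x ∈ P, ∃ C : ℝ, ∀ θ : ℝ, |stripPhi θ P x| ≤ C := by
    intro x hx
    obtain ⟨ε, hε, h⟩ := hinner x hx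
    exact ⟨Real.log (2 * R / ε), fun θ =>
      stripPhi_abs_le θ P x R ε hR hε (hRθ θ).2.2.2.1 (hRθ θ).2.2.2.2 (h θ).1 (h θ).2⟩
  have hnn : ∀ x y : ℝ × ℝ, ∀ i : ℕ, 0 ≤ w i * stripD (θi i) P x y :=
    fun x y i => mul_nonneg (hw i).le (abs_nonneg _)
  have hSummable : ∀ x ∈ P, ∀ y ∈ P, Summable (fun i => w i * stripD (θi i) P x y) := by
    intro x hx y hy
    obtain ⟨Cx, hCx⟩ := hphi_bd x hx
    obtain ⟨Cy, hCy⟩ := hphi_bd y hy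
    refine Summable.of_nonneg_of_le (hnn x y) (fun i => ?_) (hsum.mul_right (Cy + Cx))
    rw [hD_eq x hx y hy]
    have hb : |stripPhi (θi i) P y - stripPhi (θi i) P x| ≤ Cy + Cx :=
      (abs_sub _ _).trans (add_le_add (hCy _) (hCx _))
    exact mul_le_mul_of_nonneg_left hb (hw i).le
  refine ⟨hSummable, ?_, ?_, ?_⟩
  · -- zero iff eq
    intro x hx y hy
    constructor
    · intro h
      have hterm : ∀ i, w i * stripD (θi i) P x y = 0 := by
        intro i
        have hle := Summable.le_tsum (hSummable x hx y hy) i (fun j _ => hnn x y j)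
        have := hnn x y i
        linarith
      have hproj_eq : ∀ i, projDir (θi i) x = projDir (θi i) y := by
        intro i
        have hd0 : stripD (θi i) P x y = 0 := by
          rcases mul_eq_zero.mp (hterm i) with h' | h'
          · exact absurd h' (hw i).ne'
          · exact h'
        rw [hD_eq x hx y hy] at hd0
        have hphieq : stripPhi (θi i) P y = stripPhi (θi i) P x := by
          rwa [abs_eq_zero, sub_eq_zero] at hd0
        set θ := θi i
        obtain ⟨hx1, hx2⟩ := hpos x hx θ
        obtain ⟨hy1, hy2⟩ := hpos y hy θ
        have hq : (projDir θ y - stripXi θ P) / (stripEta θ P - projDir θ y) =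
            (projDir θ x - stripXi θ P) / (stripEta θ P - projDir θ x) := by
          have e1 := Real.exp_log (div_pos hy1 hy2)
          have e2 := Real.exp_log (div_pos hx1 hx2)
          rw [← e1, ← e2]
          unfold stripPhi at hphieq
          rw [hphieq]
        have hcross := (div_eq_div_iff hy2.ne' hx2.ne').mp hq
        have hkey : (projDir θ y - projDir θ x) * (stripEta θ P - stripXi θ P) = 0 := by
          linear_combination hcross
        rcases mul_eq_zero.mp hkey with h' | h'
        · linarith
        · linarith
      have hcont : Continuous fun θ : ℝ => projDir θ x - projDir θ y := by
        unfold projDir; fun_prop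
      have hclosed : IsClosed {θ : ℝ | projDir θ x - projDir θ y = 0} :=
        isClosed_eq hcont continuous_const
      have hsub : Set.range θi ⊆ {θ : ℝ | projDir θ x - projDir θ y = 0} := by
        rintro _ ⟨i, rfl⟩
        simp [hproj_eq i, sub_eq_zero]
      have hall : Set.Ico 0 (2 * Real.pi) ⊆ {θ : ℝ | projDir θ x - projDir θ y = 0} :=
        hdense.trans (hclosed.closure_subset_iff.mpr hsub)
      have hpi := Real.pi_pos
      have h0 : x.1 = y.1 := by
        have := hall ⟨le_refl 0, by linarith⟩
        simp only [Set.mem_setOf_eq, projDir, Real.cos_zero, Real.sin_zero, sub_eq_zero] at this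
        linarith
      have h1 : x.2 = y.2 := by
        have := hall ⟨(by linarith : (0:ℝ) ≤ Real.pi / 2), by linarith⟩
        simp only [Set.mem_setOf_eq, projDir, Real.cos_pi_div_two, Real.sin_pi_div_two,
          sub_eq_zero] at this
        linarith
      exact Prod.ext h0 h1
    · rintro rfl
      have hz : ∀ i, w i * stripD (θi i) P x x = 0 := by
        intro i
        have hd : stripD (θi i) P x x = 0 := by
          obtain ⟨h1, h2⟩ := hpos x hx (θi i)
          unfold stripD
          rw [div_self (by positivity), Real.log_one, abs_zero]
        rw [hd, mul_zero]
      rw [tsum_congr hz, tsum_zero]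
  · -- symmetry
    intro x hx y hy
    refine tsum_congr fun i => ?_
    rw [hD_eq x hx y hy, hD_eq y hy x hx, abs_sub_comm]
  · -- triangle
    intro x hx y hy z hz
    have hS1 := hSummable x hx y hy
    have hS2 := hSummable x hx z hz
    have hS3 := hSummable z hz y hy
    have hpt : ∀ i, w i * stripD (θi i) P x y ≤
        w i * stripD (θi i) P x z + w i * stripD (θi i) P z y := by
      intro i
      rw [hD_eq x hx y hy, hD_eq x hx z hz, hD_eq z hz y hy]
      have habs : |stripPhi (θi i) P y - stripPhi (θi i) P x| ≤
          |stripPhi (θi i) P z - stripPhi (θi i) P x| +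
          |stripPhi (θi i) P y - stripPhi (θi i) P z| := by
        have := abs_sub_le (stripPhi (θi i) P y) (stripPhi (θi i) P z) (stripPhi (θi i) P x)
        linarith [this, abs_sub_comm (stripPhi (θi i) P y) (stripPhi (θi i) P z)]
      calc w i * |stripPhi (θi i) P y - stripPhi (θi i) P x|
          ≤ w i * (|stripPhi (θi i) P z - stripPhi (θi i) P x| +
            |stripPhi (θi i) P y - stripPhi (θi i) P z|) :=
            mul_le_mul_of_nonneg_left habs (hw i).le
        _ = _ := by ring
    calc (∑' i, w i * stripD (θi i) P x y)
        ≤ ∑' i, (w i * stripD (θi i) P x z + w i * stripD (θi i) P z y) :=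
          Summable.tsum_le_tsum hpt hS1 (hS2.add hS3)
      _ = _ := Summable.tsum_add hS2 hS3
end

section
/- Let P ⊂ ℝ² be an open bounded convex set with metric d = ∑_i w_i d_{θ_i} (the weighted sum of strip cross-ratio pseudo-metrics over a dense set of directions containing all directions of the sides of P, with ∑ w_i < ∞). If x, y, z ∈ P are not collinear, then d(x,y) < d(x,z) + d(z,y). In particular, the Euclidean segment is the unique d-geodesic between any two points of P. -/
/-! In a fixed direction `θ` the log cross-ratio splits: `d_θ(x, y) = |g_θ y - g_θ x|` with
`g_θ p = log (⟨p, u_θ⟩ - ξ_θ) - log (η_θ - ⟨p, u_θ⟩)` (`stripCoord`) strictly increasing in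
`⟨p, u_θ⟩`. Hence every `d_θ` satisfies the triangle inequality, and for `u_θ₀ ⊥ y - x` it is
strict, since `d_θ₀(x, y) = 0 < d_θ₀(x, z)` when `z` is off the line `xy`. As `ξ_θ`, `η_θ` are an
infimum and a supremum of a jointly continuous function over the compact set `closure P`, each
`d_θ(a, b)` is continuous (and `2π`-periodic, hence bounded) in `θ`; so the strict inequality
holds on a neighbourhood of `θ₀`, which contains some `θ i`, and the weighted series converge. -/

open Set Filter Topology Real

theorem collinear_of_dual_apply_eq {K V : Type*} [Field K] [AddCommGroup V] [Module K V]
    [FiniteDimensional K V] (hV : Module.finrank K V = 2) {f : Module.Dual K V} (hf : f ≠ 0)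
    {s : Set V} {c : K} (hs : ∀ p ∈ s, f p = c) : Collinear K s := by
  have hker : vectorSpan K s ≤ LinearMap.ker f := by
    rw [vectorSpan_def, Submodule.span_le]
    rintro _ ⟨p, hp, q, hq, rfl⟩
    simp [hs p hp, hs q hq]
  rw [collinear_iff_finrank_le_one]
  have := Module.Dual.finrank_ker_add_one_of_ne_zero hf
  have := Submodule.finrank_mono hker
  omega

theorem csSup_image_closure {X α : Type*} [TopologicalSpace X] [ConditionallyCompleteLattice α]
    [TopologicalSpace α] [ClosedIicTopology α] {f : X → α} (hf : Continuous f) {s : Set X}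
    (hs : s.Nonempty) (hbdd : BddAbove (f '' s)) : sSup (f '' closure s) = sSup (f '' s) := by
  have hub : upperBounds (f '' closure s) = upperBounds (f '' s) :=
    (upperBounds_mono_set (image_mono subset_closure)).antisymm <| by
      rw [← upperBounds_closure (f '' s)]
      exact upperBounds_mono_set (image_closure_subset_closure_image hf)
  have hlub : IsLUB (f '' closure s) (sSup (f '' s)) := by
    rw [IsLUB, hub]
    exact isLUB_csSup (hs.image f) hbdd
  exact hlub.csSup_eq ((hs.mono subset_closure).image f)

theorem csInf_image_closure {X α : Type*} [TopologicalSpace X] [ConditionallyCompleteLattice α]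
    [TopologicalSpace α] [ClosedIciTopology α] {f : X → α} (hf : Continuous f) {s : Set X}
    (hs : s.Nonempty) (hbdd : BddBelow (f '' s)) : sInf (f '' closure s) = sInf (f '' s) :=
  csSup_image_closure (α := αᵒᵈ) hf hs hbdd

noncomputable def projDirDual (θ : ℝ) : Module.Dual ℝ (ℝ × ℝ) :=
  cos θ • LinearMap.fst ℝ ℝ ℝ + sin θ • LinearMap.snd ℝ ℝ ℝ

@[simp] lemma projDirDual_apply (θ : ℝ) (p : ℝ × ℝ) : projDirDual θ p = projDir θ p := by
  simp [projDirDual, projDir, mul_comm]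

lemma projDir_cos_sin (θ : ℝ) : projDir θ (cos θ, sin θ) = 1 := by
  simp [projDir, ← sq, cos_sq_add_sin_sq]

lemma projDirDual_ne_zero (θ : ℝ) : projDirDual θ ≠ 0 := fun h => by
  simpa [projDir_cos_sin] using LinearMap.congr_fun h (cos θ, sin θ)

lemma projDir_add_smul_cos_sin (θ s : ℝ) (p : ℝ × ℝ) :
    projDir θ (p + s • (cos θ, sin θ)) = projDir θ p + s := by
  rw [← projDirDual_apply, map_add, map_smul, projDirDual_apply, projDirDual_apply,
    projDir_cos_sin, smul_eq_mul, mul_one]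

lemma continuous_projDir : Continuous fun q : ℝ × (ℝ × ℝ) => projDir q.1 q.2 := by
  unfold projDir; fun_prop

lemma continuous_projDir_left (p : ℝ × ℝ) : Continuous fun θ => projDir θ p :=
  continuous_projDir.comp (.prodMk_left p)

lemma continuous_projDir_right (θ : ℝ) : Continuous (projDir θ) :=
  continuous_projDir.comp (.prodMk_right θ)

lemma projDir_add_two_pi (θ : ℝ) : projDir (θ + 2 * π) = projDir θ := by
  ext p; simp [projDir]

lemma exists_projDir_eq (x y : ℝ × ℝ) : ∃ θ, projDir θ x = projDir θ y := by
  rcases eq_or_ne x y with rfl | hxy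
  · exact ⟨0, rfl⟩
  -- `w = i (y - x)`, so the direction `arg w` is orthogonal to `y - x`.
  set w : ℂ := ⟨x.2 - y.2, y.1 - x.1⟩
  have hw : ‖w‖ ≠ 0 := norm_ne_zero_iff.mpr fun h => hxy <| by
    simp only [w, Complex.ext_iff, Complex.zero_re, Complex.zero_im] at h
    exact Prod.ext (by linarith) (by linarith)
  have hcos : ‖w‖ * cos (Complex.arg w) = x.2 - y.2 := Complex.norm_mul_cos_arg w
  have hsin : ‖w‖ * sin (Complex.arg w) = y.1 - x.1 := Complex.norm_mul_sin_arg w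
  refine ⟨Complex.arg w, mul_left_cancel₀ hw ?_⟩
  unfold projDir
  linear_combination (x.1 - y.1) * hcos + (x.2 - y.2) * hsin

lemma collinear_of_projDir_eq {θ : ℝ} {x y z : ℝ × ℝ} (hxy : projDir θ x = projDir θ y)
    (hxz : projDir θ x = projDir θ z) : Collinear ℝ ({x, y, z} : Set (ℝ × ℝ)) := by
  refine collinear_of_dual_apply_eq (by simp) (projDirDual_ne_zero θ) (c := projDir θ x) ?_
  intro p hp
  simp only [mem_insert_iff, mem_singleton_iff] at hp
  rw [projDirDual_apply]
  rcases hp with rfl | rfl | rfl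
  exacts [rfl, hxy.symm, hxz.symm]

lemma periodic_stripD (P : Set (ℝ × ℝ)) (x y : ℝ × ℝ) :
    Function.Periodic (fun θ => stripD θ P x y) (2 * π) := by
  intro θ
  simp only [stripD, stripXi, stripEta, projDir_add_two_pi]

noncomputable def stripCoord (θ : ℝ) (P : Set (ℝ × ℝ)) (p : ℝ × ℝ) : ℝ :=
  log (projDir θ p - stripXi θ P) - log (stripEta θ P - projDir θ p)

section Strip

variable {P : Set (ℝ × ℝ)} (hPo : IsOpen P) (hPb : Bornology.IsBounded P)

include hPb in
lemma bddBelow_projDir_image (θ : ℝ) : BddBelow (projDir θ '' P) :=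
  (hPb.isCompact_closure.bddBelow_image (continuous_projDir_right θ).continuousOn).mono
    (image_mono subset_closure)

include hPb in
lemma bddAbove_projDir_image (θ : ℝ) : BddAbove (projDir θ '' P) :=
  (hPb.isCompact_closure.bddAbove_image (continuous_projDir_right θ).continuousOn).mono
    (image_mono subset_closure)

include hPo in
lemma eventually_add_smul_mem {p : ℝ × ℝ} (hp : p ∈ P) (v : ℝ × ℝ) :
    ∀ᶠ s in 𝓝 (0 : ℝ), p + s • v ∈ P := by
  have hcont : Continuous fun s : ℝ => p + s • v := by fun_prop
  exact (hcont.tendsto' 0 p (by simp)).eventually_mem (hPo.mem_nhds hp)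

include hPo hPb in
lemma stripXi_lt_projDir {p : ℝ × ℝ} (hp : p ∈ P) (θ : ℝ) : stripXi θ P < projDir θ p := by
  obtain ⟨s, hsP, hs⟩ := ((eventually_add_smul_mem hPo hp (cos θ, sin θ)).filter_mono
    nhdsWithin_le_nhds |>.and (self_mem_nhdsWithin (s := Iio 0))).exists
  calc stripXi θ P ≤ projDir θ (p + s • (cos θ, sin θ)) :=
        csInf_le (bddBelow_projDir_image hPb θ) (mem_image_of_mem _ hsP)
    _ < projDir θ p := by rw [projDir_add_smul_cos_sin]; linarith

include hPo hPb in
lemma projDir_lt_stripEta {p : ℝ × ℝ} (hp : p ∈ P) (θ : ℝ) : projDir θ p < stripEta θ P := by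
  obtain ⟨s, hsP, hs⟩ := ((eventually_add_smul_mem hPo hp (cos θ, sin θ)).filter_mono
    nhdsWithin_le_nhds |>.and (self_mem_nhdsWithin (s := Ioi 0))).exists
  calc projDir θ p < projDir θ (p + s • (cos θ, sin θ)) := by
        rw [projDir_add_smul_cos_sin]; linarith
    _ ≤ stripEta θ P := le_csSup (bddAbove_projDir_image hPb θ) (mem_image_of_mem _ hsP)

include hPb in
lemma continuous_stripXi (hPne : P.Nonempty) : Continuous fun θ => stripXi θ P :=
  (hPb.isCompact_closure.continuous_sInf (f := projDir) continuous_projDir).congr fun θ =>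
    csInf_image_closure (continuous_projDir_right θ) hPne (bddBelow_projDir_image hPb θ)

include hPb in
lemma continuous_stripEta (hPne : P.Nonempty) : Continuous fun θ => stripEta θ P :=
  (hPb.isCompact_closure.continuous_sSup (f := projDir) continuous_projDir).congr fun θ =>
    csSup_image_closure (continuous_projDir_right θ) hPne (bddAbove_projDir_image hPb θ)

include hPo hPb in
lemma continuous_stripCoord {p : ℝ × ℝ} (hp : p ∈ P) : Continuous fun θ => stripCoord θ P p :=
  (((continuous_projDir_left p).sub (continuous_stripXi hPb ⟨p, hp⟩)).log fun θ =>
      (sub_pos.2 (stripXi_lt_projDir hPo hPb hp θ)).ne').sub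
    (((continuous_stripEta hPb ⟨p, hp⟩).sub (continuous_projDir_left p)).log fun θ =>
      (sub_pos.2 (projDir_lt_stripEta hPo hPb hp θ)).ne')

include hPo hPb in
lemma stripCoord_lt_of_projDir_lt {p q : ℝ × ℝ} (hp : p ∈ P) (hq : q ∈ P) {θ : ℝ}
    (h : projDir θ p < projDir θ q) : stripCoord θ P p < stripCoord θ P q := by
  have hξ := log_lt_log (sub_pos.2 (stripXi_lt_projDir hPo hPb hp θ))
    (sub_lt_sub_right h (stripXi θ P))
  have hη := log_lt_log (sub_pos.2 (projDir_lt_stripEta hPo hPb hq θ))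
    (sub_lt_sub_left h (stripEta θ P))
  unfold stripCoord
  linarith

include hPo hPb in
lemma stripD_eq_abs_stripCoord_sub {x y : ℝ × ℝ} (hx : x ∈ P) (hy : y ∈ P) (θ : ℝ) :
    stripD θ P x y = |stripCoord θ P y - stripCoord θ P x| := by
  have hx₁ := sub_pos.2 (stripXi_lt_projDir hPo hPb hx θ)
  have hx₂ := sub_pos.2 (projDir_lt_stripEta hPo hPb hx θ)
  have hy₁ := sub_pos.2 (stripXi_lt_projDir hPo hPb hy θ)
  have hy₂ := sub_pos.2 (projDir_lt_stripEta hPo hPb hy θ)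
  rw [stripD, stripCoord, stripCoord, log_div (by positivity) (by positivity),
    log_mul hy₁.ne' hx₂.ne', log_mul hx₁.ne' hy₂.ne']
  congr 1
  ring

include hPo hPb in
lemma continuous_stripD {x y : ℝ × ℝ} (hx : x ∈ P) (hy : y ∈ P) :
    Continuous fun θ => stripD θ P x y := by
  simp only [stripD_eq_abs_stripCoord_sub hPo hPb hx hy]
  exact ((continuous_stripCoord hPo hPb hy).sub (continuous_stripCoord hPo hPb hx)).abs

include hPo hPb in
lemma stripD_le_add {x y z : ℝ × ℝ} (hx : x ∈ P) (hy : y ∈ P) (hz : z ∈ P) (θ : ℝ) :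
    stripD θ P x y ≤ stripD θ P x z + stripD θ P z y := by
  rw [stripD_eq_abs_stripCoord_sub hPo hPb hx hy, stripD_eq_abs_stripCoord_sub hPo hPb hx hz,
    stripD_eq_abs_stripCoord_sub hPo hPb hz hy, add_comm]
  exact abs_sub_le _ _ _

include hPo hPb in
lemma stripD_lt_add_of_projDir_eq {x y z : ℝ × ℝ} (hx : x ∈ P) (hy : y ∈ P) (hz : z ∈ P)
    {θ : ℝ} (hxy : projDir θ x = projDir θ y) (hxz : projDir θ x ≠ projDir θ z) :
    stripD θ P x y < stripD θ P x z + stripD θ P z y := by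
  have hGxy : stripCoord θ P y = stripCoord θ P x := by simp only [stripCoord, hxy]
  have hGxz : stripCoord θ P z - stripCoord θ P x ≠ 0 := by
    rcases hxz.lt_or_gt with h | h
    exacts [sub_ne_zero.2 (stripCoord_lt_of_projDir_lt hPo hPb hx hz h).ne',
      sub_ne_zero.2 (stripCoord_lt_of_projDir_lt hPo hPb hz hx h).ne]
  rw [stripD_eq_abs_stripCoord_sub hPo hPb hx hy, stripD_eq_abs_stripCoord_sub hPo hPb hx hz,
    stripD_eq_abs_stripCoord_sub hPo hPb hz hy, hGxy, sub_self, abs_zero]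
  exact add_pos_of_pos_of_nonneg (abs_pos.2 hGxz) (abs_nonneg _)

include hPo hPb in
lemma summable_mul_stripD {w : ℕ → ℝ} (hw : ∀ i, 0 ≤ w i) (hsum : Summable w) (θi : ℕ → ℝ)
    {x y : ℝ × ℝ} (hx : x ∈ P) (hy : y ∈ P) : Summable fun i => w i * stripD (θi i) P x y := by
  obtain ⟨M, hM⟩ := ((periodic_stripD P x y).isBounded_of_continuous two_pi_pos.ne'
    (continuous_stripD hPo hPb hx hy)).bddAbove
  exact (hsum.mul_right M).of_nonneg_of_le (fun i => mul_nonneg (hw i) (abs_nonneg _))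
    fun i => mul_le_mul_of_nonneg_left (hM (mem_range_self _)) (hw i)

end Strip

theorem stmt_14_general (P : Set (ℝ × ℝ)) (hPo : IsOpen P) (hPb : Bornology.IsBounded P)
    (θi : ℕ → ℝ) (hdense : Dense (Set.range θi))
    (w : ℕ → ℝ) (hw : ∀ i, 0 < w i) (hsum : Summable w)
    (x y z : ℝ × ℝ) (hx : x ∈ P) (hy : y ∈ P) (hz : z ∈ P)
    (hncol : ¬ Collinear ℝ ({x, y, z} : Set (ℝ × ℝ))) :
    (∑' i, w i * stripD (θi i) P x y) <
      (∑' i, w i * stripD (θi i) P x z) + ∑' i, w i * stripD (θi i) P z y := by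
  obtain ⟨θ₀, hxy⟩ := exists_projDir_eq x y
  have hxz : projDir θ₀ x ≠ projDir θ₀ z := fun hxz => hncol (collinear_of_projDir_eq hxy hxz)
  obtain ⟨_, ⟨i, rfl⟩, hi⟩ := hdense.exists_mem_open
    (isOpen_lt (continuous_stripD hPo hPb hx hy)
      ((continuous_stripD hPo hPb hx hz).add (continuous_stripD hPo hPb hz hy)))
    ⟨θ₀, stripD_lt_add_of_projDir_eq hPo hPb hx hy hz hxy hxz⟩
  have hw₀ : ∀ i, 0 ≤ w i := fun i => (hw i).le
  have hsxz := summable_mul_stripD hPo hPb hw₀ hsum θi hx hz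
  have hszy := summable_mul_stripD hPo hPb hw₀ hsum θi hz hy
  calc ∑' i, w i * stripD (θi i) P x y
      < ∑' i, (w i * stripD (θi i) P x z + w i * stripD (θi i) P z y) := by
        refine (hsxz.add hszy).tsum_lt_tsum_of_nonneg (i := i)
          (fun j => mul_nonneg (hw₀ j) (abs_nonneg _)) (fun j => ?_) ?_
        · rw [← mul_add]
          exact mul_le_mul_of_nonneg_left (stripD_le_add hPo hPb hx hy hz _) (hw₀ j)
        · rw [← mul_add]
          exact mul_lt_mul_of_pos_left hi (hw i)
    _ = _ := hsxz.tsum_add hszy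

theorem stmt_14 (P : Set (ℝ × ℝ)) (hPo : IsOpen P) (hPb : Bornology.IsBounded P)
    (hPconv : Convex ℝ P) (hPne : P.Nonempty)
    (θi : ℕ → ℝ) (hdense : Dense (Set.range θi))
    (w : ℕ → ℝ) (hw : ∀ i, 0 < w i) (hsum : Summable w)
    (x y z : ℝ × ℝ) (hx : x ∈ P) (hy : y ∈ P) (hz : z ∈ P)
    (hncol : ¬ Collinear ℝ ({x, y, z} : Set (ℝ × ℝ))) :
    (∑' i, w i * stripD (θi i) P x y) <
      (∑' i, w i * stripD (θi i) P x z) + ∑' i, w i * stripD (θi i) P z y :=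
  stmt_14_general P hPo hPb θi hdense w hw hsum x y z hx hy hz hncol
end
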